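/- For the finite-set library specification, the operation (delete, k, true) is h-voidable if and only if either h contains no operation on the key k, or the history [(delete, k, true)] ++ h is not legal from any state. -/
import Mathlib


universe u v

variable {Q : Type u} {Op : Type v}

inductive Legal (Δ : Op → Q → Q → Prop) : Q → List Op → Q → Prop
  | nil (q : Q) : Legal Δ q [] q
  | snoc {q q' q'' : Q} {h : List Op} {op : Op} :
      Legal Δ q h q' → Δ op q' q'' → Legal Δ q (h ++ [op]) q''

def LegalFrom (Δ : Op → Q → Q → Prop) (q : Q) (h : List Op) : Prop :=
  ∃ q', Legal Δ q h q'

def HEquiv (Δ : Op → Q → Q → Prop) (h₁ h₂ : List Op) : Prop :=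
  ∀ q q' : Q, Legal Δ q h₁ q' ↔ Legal Δ q h₂ q'

def Commutes (Δ : Op → Q → Q → Prop) (op₁ op₂ : Op) : Prop :=
  HEquiv Δ [op₁, op₂] [op₂, op₁]

def Voidable (Δ : Op → Q → Q → Prop) (op : Op) (h : List Op) : Prop :=
  ∀ q : Q, LegalFrom Δ q (op :: h) → LegalFrom Δ q h

inductive SetOp : Type where
  | ins (k : ℕ) (b : Bool)
  | del (k : ℕ) (b : Bool)

def SetOp.key : SetOp → ℕ
  | .ins k _ => k
  | .del k _ => k

def SetDelta : SetOp → Finset ℕ → Finset ℕ → Prop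
  | .ins k true,  S, S' => k ∉ S ∧ S' = insert k S
  | .ins k false, S, S' => k ∈ S ∧ S' = S
  | .del k true,  S, S' => k ∈ S ∧ S' = S.erase k
  | .del k false, S, S' => k ∉ S ∧ S' = S

lemma legal_nil_inv {Δ : Op → Q → Q → Prop} {q q' : Q} {l : List Op}
    (H : Legal Δ q l q') (hl : l = []) : q = q' := by
  cases H with
  | nil => rfl
  | snoc h₁ h₂ => simp_all

lemma legal_snoc_inv {Δ : Op → Q → Q → Prop} {q q' : Q} {l h : List Op} {op : Op}
    (H : Legal Δ q l q') (hl : l = h ++ [op]) : ∃ m, Legal Δ q h m ∧ Δ op m q' := by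
  cases H with
  | nil => simp_all
  | @snoc m _ h' op' h₁ h₂ =>
    obtain ⟨rfl, rfl⟩ : h' = h ∧ op' = op := by
      have := List.append_inj' hl rfl
      simp_all
    exact ⟨m, h₁, h₂⟩

lemma legal_append_iff {Δ : Op → Q → Q → Prop} {q q' : Q} {h₁ h₂ : List Op} :
    Legal Δ q (h₁ ++ h₂) q' ↔ ∃ m, Legal Δ q h₁ m ∧ Legal Δ m h₂ q' := by
  induction h₂ using List.reverseRecOn generalizing q' with
  | nil =>
    simp only [List.append_nil]
    constructor
    · exact fun H => ⟨q', H, Legal.nil q'⟩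
    · rintro ⟨m, H, H0⟩; rwa [legal_nil_inv H0 rfl] at H
  | append_singleton t op ih =>
    constructor
    · intro H
      rw [← List.append_assoc] at H
      obtain ⟨m, H1, H2⟩ := legal_snoc_inv H rfl
      obtain ⟨m', Ha, Hb⟩ := ih.mp H1
      exact ⟨m', Ha, Legal.snoc Hb H2⟩
    · rintro ⟨m, H1, H2⟩
      obtain ⟨m', Ha, Hb⟩ := legal_snoc_inv H2 rfl
      rw [← List.append_assoc]
      exact Legal.snoc (ih.mpr ⟨m, H1, Ha⟩) Hb

lemma legal_cons_iff {Δ : Op → Q → Q → Prop} {q q' : Q} {h : List Op} {op : Op} :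
    Legal Δ q (op :: h) q' ↔ ∃ m, Δ op q m ∧ Legal Δ m h q' := by
  have he : op :: h = [op] ++ h := rfl
  rw [he, legal_append_iff]
  constructor
  · rintro ⟨m, H1, H2⟩
    obtain ⟨m', Ha, Hb⟩ := legal_snoc_inv H1 (h := []) rfl
    rw [← legal_nil_inv Ha rfl] at Hb
    exact ⟨m, Hb, H2⟩
  · rintro ⟨m, H1, H2⟩
    exact ⟨m, by exact (Legal.nil q).snoc H1, H2⟩

lemma setdelta_det {op : SetOp} {S T T' : Finset ℕ} (h1 : SetDelta op S T)
    (h2 : SetDelta op S T') : T = T' := by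
  cases op with
  | ins k b => cases b <;> simp_all [SetDelta]
  | del k b => cases b <;> simp_all [SetDelta]

lemma step_insert {k : ℕ} {op : SetOp} (hk : op.key ≠ k) {S T : Finset ℕ}
    (H : SetDelta op S T) : SetDelta op (insert k S) (insert k T) := by
  cases op with
  | ins k' b =>
    simp only [SetOp.key] at hk
    cases b <;> obtain ⟨h1, rfl⟩ := H
    · exact ⟨Finset.mem_insert_of_mem h1, rfl⟩
    · exact ⟨by simp [hk, h1], Finset.insert_comm k k' S⟩
  | del k' b =>
    simp only [SetOp.key] at hk
    cases b <;> obtain ⟨h1, rfl⟩ := H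
    · exact ⟨by simp [hk, h1], rfl⟩
    · exact ⟨Finset.mem_insert_of_mem h1, (Finset.erase_insert_of_ne (Ne.symm hk)).symm⟩

lemma step_mem {k : ℕ} {op : SetOp} (hk : op.key ≠ k) {S T : Finset ℕ}
    (hks : k ∈ S) (H : SetDelta op S T) : k ∈ T := by
  cases op with
  | ins k' b =>
    simp only [SetOp.key] at hk
    cases b <;> obtain ⟨h1, rfl⟩ := H
    · exact hks
    · exact Finset.mem_insert_of_mem hks
  | del k' b =>
    simp only [SetOp.key] at hk
    cases b <;> obtain ⟨h1, rfl⟩ := H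
    · exact hks
    · exact Finset.mem_erase.mpr ⟨Ne.symm hk, hks⟩

lemma step_erase {k : ℕ} {op : SetOp} (hk : op.key ≠ k) {S T : Finset ℕ}
    (H : SetDelta op S T) : SetDelta op (S.erase k) (T.erase k) := by
  cases op with
  | ins k' b =>
    simp only [SetOp.key] at hk
    cases b <;> obtain ⟨h1, rfl⟩ := H
    · exact ⟨Finset.mem_erase.mpr ⟨hk, h1⟩, rfl⟩
    · exact ⟨fun hm => h1 (Finset.mem_of_mem_erase hm), Finset.erase_insert_of_ne hk⟩
  | del k' b =>
    simp only [SetOp.key] at hk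
    cases b <;> obtain ⟨h1, rfl⟩ := H
    · exact ⟨fun hm => h1 (Finset.mem_of_mem_erase hm), rfl⟩
    · exact ⟨Finset.mem_erase.mpr ⟨hk, h1⟩, Finset.erase_right_comm⟩

lemma sim_insert {k : ℕ} {h : List SetOp} {S T : Finset ℕ}
    (H : Legal SetDelta S h T) (hk : ∀ op ∈ h, op.key ≠ k) :
    Legal SetDelta (insert k S) h (insert k T) := by
  induction H with
  | nil => exact Legal.nil _
  | @snoc q' q'' h' op H1 H2 ih =>
    exact (ih fun o ho => hk o (List.mem_append_left _ ho)).snoc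
      (step_insert (hk op (List.mem_append_right _ (List.mem_singleton_self _))) H2)

/-- If h is legal both from S (with k ∈ S) and from S.erase k, then h has no ops on k. -/
lemma no_key_of_both (k : ℕ) : ∀ (h : List SetOp) (S T T' : Finset ℕ), k ∈ S →
    Legal SetDelta S h T → Legal SetDelta (S.erase k) h T' → ∀ op ∈ h, op.key ≠ k := by
  intro h
  induction h with
  | nil => intro _ _ _ _ _ _ op hop; simp at hop
  | cons op t ih =>
    intro S T T' hkS H1 H2 o ho
    obtain ⟨m, Hd, Ht⟩ := legal_cons_iff.mp H1
    obtain ⟨m', Hd', Ht'⟩ := legal_cons_iff.mp H2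
    by_cases hop : op.key = k
    · exfalso
      cases op with
      | ins k' b =>
        simp only [SetOp.key] at hop; subst hop
        cases b
        · exact (Finset.mem_erase.mp Hd'.1).1 rfl
        · exact Hd.1 hkS
      | del k' b =>
        simp only [SetOp.key] at hop; subst hop
        cases b
        · exact Hd.1 hkS
        · exact (Finset.mem_erase.mp Hd'.1).1 rfl
    · rcases List.mem_cons.mp ho with rfl | hot
      · exact hop
      · have hstep := step_erase hop Hd
        have : m' = m.erase k := setdelta_det Hd' hstep
        subst this
        exact ih m T T' (step_mem hop hkS Hd) Ht Ht' o hot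

/-- A successful delete of key k is h-voidable iff h contains no operation on
key k, or prepending the delete to h is not legal from any state. -/
theorem delete_true_voidable_iff (k : ℕ) (h : List SetOp) :
    Voidable SetDelta (SetOp.del k true) h ↔
      ((∀ op ∈ h, op.key ≠ k) ∨
       ¬ ∃ S : Finset ℕ, LegalFrom SetDelta S (SetOp.del k true :: h)) := by
  constructor
  · intro hv
    by_contra hc
    push_neg at hc
    obtain ⟨⟨o, ho, hko⟩, S, hS⟩ := hc
    obtain ⟨T, hT⟩ := hv S hS
    obtain ⟨T', hT'⟩ := hS
    obtain ⟨m, hd, hrest⟩ := legal_cons_iff.mp hT'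
    obtain ⟨hkS, rfl⟩ : k ∈ S ∧ m = S.erase k := hd
    exact no_key_of_both k h S T T' hkS hT hrest o ho hko
  · rintro (hk | hn)
    · rintro q ⟨q', hq⟩
      obtain ⟨m, hd, hrest⟩ := legal_cons_iff.mp hq
      obtain ⟨hkq, rfl⟩ : k ∈ q ∧ m = q.erase k := hd
      have H := sim_insert hrest hk
      rw [Finset.insert_erase hkq] at H
      exact ⟨_, H⟩
    · intro q hq
      exact absurd ⟨q, hq⟩ hn
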